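/- arXiv:math/0006117 — 3 statements merged into one kernel-verified Lean document; each statement's English description precedes it below -/
import Mathlib

section
/- Let L be a Lie algebra with dim H²(L;L) < ∞ and fix a linear section μ : H²(L;L) → C²(L;L) choosing a representative cocycle for each class. Define on L ⊕ Hom(H²(L;L), L) the bracket [(l₁,φ₁),(l₂,φ₂)] = ([l₁,l₂], ψ) where ψ(α) = μ(α)(l₁,l₂) + [φ₁(α), l₂] + [l₁, φ₂(α)]. Then this bracket satisfies the Jacobi identity, i.e., defines a Lie algebra structure. -/
/-- The bracket of the universal infinitesimal deformation on `L ⊕ Hom(H²(L;L), L)`: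
`[(l₁,φ₁),(l₂,φ₂)] = ([l₁,l₂], α ↦ μ(α)(l₁,l₂) + [φ₁(α), l₂] + [l₁, φ₂(α)])`. -/
def infBr {K L V : Type*} [Field K] [LieRing L] [LieAlgebra K L]
    (μ : V → L → L → L) : (L × (V → L)) → (L × (V → L)) → (L × (V → L)) :=
  fun x y => (⁅x.1, y.1⁆, fun α => μ α x.1 y.1 + ⁅x.2 α, y.1⁆ + ⁅x.1, y.2 α⁆)

/-!
The first component of the bracket is the bracket of `L`, so its Jacobi identity is that of `L`.
In the second component, the cyclic sum of `[[x, y], z]` splits into the terms involving `μ` only,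
which cancel because `μ(α)` is a skew-symmetric cocycle, and, for each of `x.2 α`, `y.2 α`, `z.2 α`,
three terms which form an instance of the Jacobi identity of `L`.
-/

theorem lie_jacobi_left {L : Type*} [LieRing L] (x y z : L) :
    ⁅⁅x, y⁆, z⁆ + ⁅⁅y, z⁆, x⁆ + ⁅⁅z, x⁆, y⁆ = 0 := by
  rw [← lie_skew ⁅x, y⁆ z, ← lie_skew ⁅y, z⁆ x, ← lie_skew ⁅z, x⁆ y]
  linear_combination (norm := abel) -lie_jacobi (x := x) (y := y) (z := z)

theorem cocycle_cyclic_of_skew {K L : Type*} [Field K] [NeZero (3 : K)] [LieRing L]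
    [LieAlgebra K L] (μ : L → L → L)
    (hskew : ∀ l₁ l₂ : L, μ l₁ l₂ = -μ l₂ l₁)
    (hcoc : ∀ l₁ l₂ l₃ : L,
      -μ ⁅l₁, l₂⁆ l₃ + μ ⁅l₁, l₃⁆ l₂ - μ ⁅l₂, l₃⁆ l₁
        + ⁅l₁, μ l₂ l₃⁆ - ⁅l₂, μ l₁ l₃⁆ + ⁅l₃, μ l₁ l₂⁆ = 0)
    (a b c : L) :
    μ ⁅a, b⁆ c + μ ⁅b, c⁆ a + μ ⁅c, a⁆ b + ⁅μ a b, c⁆ + ⁅μ b c, a⁆ + ⁅μ c a, b⁆ = 0 := by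
  have E1 := hcoc a b c
  have E2 := hcoc b c a
  have E3 := hcoc c a b
  have E4 := hcoc a c b
  have E5 := hcoc c b a
  have E6 := hcoc b a c
  rw [hskew a c] at E1 E4 E6
  rw [hskew b a] at E2 E5 E6
  rw [hskew c b] at E3 E4 E5
  rw [← lie_skew (μ a b) c, ← lie_skew (μ b c) a, ← lie_skew (μ c a) b]
  -- `μ` need not be additive, so `μ ⁅c, a⁆ b` is not `-μ ⁅a, c⁆ b`: summing the identity over
  -- all six orderings of `a, b, c` only yields three times the cyclic form.
  have h3 : (3 : K) • (μ ⁅a, b⁆ c + μ ⁅b, c⁆ a + μ ⁅c, a⁆ b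
      + -⁅c, μ a b⁆ + -⁅a, μ b c⁆ + -⁅b, μ c a⁆) = 0 := by
    simp only [lie_neg] at E1 E2 E3 E4 E5 E6
    linear_combination (norm := module) (-2 : K) • (E1 + E2 + E3) - (E4 + E5 + E6)
  exact (smul_eq_zero.mp h3).resolve_left (NeZero.ne 3)

section InfBr

variable {K L V : Type*} [Field K] [LieRing L] [LieAlgebra K L] (μ : V → L → L → L)

theorem infBr_self (halt : ∀ (α : V) (l : L), μ α l l = 0) (x : L × (V → L)) :
    infBr (K := K) μ x x = 0 := by
  refine Prod.ext (lie_self x.1) (funext fun α => ?_)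
  simp only [infBr, halt, zero_add, Prod.snd_zero, Pi.zero_apply]
  rw [← lie_skew (x.2 α) x.1, neg_add_cancel]

theorem infBr_jacobi [NeZero (3 : K)] (hskew : ∀ (α : V) (l₁ l₂ : L), μ α l₁ l₂ = -μ α l₂ l₁)
    (hcoc : ∀ (α : V) (l₁ l₂ l₃ : L),
      -μ α ⁅l₁, l₂⁆ l₃ + μ α ⁅l₁, l₃⁆ l₂ - μ α ⁅l₂, l₃⁆ l₁
        + ⁅l₁, μ α l₂ l₃⁆ - ⁅l₂, μ α l₁ l₃⁆ + ⁅l₃, μ α l₁ l₂⁆ = 0)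
    (x y z : L × (V → L)) :
    infBr (K := K) μ (infBr (K := K) μ x y) z + infBr (K := K) μ (infBr (K := K) μ y z) x
      + infBr (K := K) μ (infBr (K := K) μ z x) y = 0 := by
  refine Prod.ext (lie_jacobi_left x.1 y.1 z.1) (funext fun α => ?_)
  simp only [infBr, Prod.snd_add, Pi.add_apply, add_lie, Prod.snd_zero, Pi.zero_apply]
  linear_combination (norm := abel)
    cocycle_cyclic_of_skew (K := K) (μ α) (hskew α) (hcoc α) x.1 y.1 z.1
      + lie_jacobi_left (x.2 α) y.1 z.1 + lie_jacobi_left (y.2 α) z.1 x.1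
      + lie_jacobi_left (z.2 α) x.1 y.1

end InfBr

/-- if every `μ(α)` is a skew-symmetric 2-cocycle of the Chevalley–Eilenberg
complex of `L`, then the bracket above on `L ⊕ Hom(H²(L;L), L)` satisfies the Jacobi
identity (and is skew), i.e. defines a Lie algebra structure. -/
theorem stmt_8 (K L V : Type*) [Field K] [CharZero K] [LieRing L] [LieAlgebra K L]
    (μ : V → L → L → L)
    (halt : ∀ (α : V) (l : L), μ α l l = 0)
    (hskew : ∀ (α : V) (l₁ l₂ : L), μ α l₁ l₂ = -μ α l₂ l₁)
    (hcoc : ∀ (α : V) (l₁ l₂ l₃ : L),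
      -μ α ⁅l₁, l₂⁆ l₃ + μ α ⁅l₁, l₃⁆ l₂ - μ α ⁅l₂, l₃⁆ l₁
        + ⁅l₁, μ α l₂ l₃⁆ - ⁅l₂, μ α l₁ l₃⁆ + ⁅l₃, μ α l₁ l₂⁆ = 0) :
    (∀ x : L × (V → L), infBr (K := K) μ x x = 0) ∧
    (∀ x y z : L × (V → L),
      infBr (K := K) μ (infBr (K := K) μ x y) z
        + infBr (K := K) μ (infBr (K := K) μ y z) x
        + infBr (K := K) μ (infBr (K := K) μ z x) y = 0) :=
  ⟨infBr_self μ halt, infBr_jacobi μ hskew hcoc⟩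
end

section
/- For each t ∈ ℂ, the bracket [e_i, e_j]¹_t = (j−i)(e_{i+j} + t e_{i+j−1}) on the span of {e_i : i ≥ 1} satisfies the Jacobi identity, defining a one-parameter deformation of the Lie algebra L₁. -/
/-! The Jacobiator is trilinear, so it suffices to check it on basis vectors `e_i, e_j, e_k`:
all terms are then multiples of `e_{i+j+k}`, `e_{i+j+k-1}`, `e_{i+j+k-2}`, and the coefficients
cancel. Conceptually, `e_i ↦ xⁱ (x + t) ∂ₓ` identifies the bracket with the commutator of
vector fields on the line. -/

/-- The bilinear bracket `[e_i, e_j]¹_t = (j − i)(e_{i+j} + t e_{i+j−1})` on the span of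
`{e_i : i ≥ 1}` (note `i + j − 1 ≥ 1` for `i, j ≥ 1`). -/
noncomputable def L1br1 (t : ℂ) : (ℕ+ →₀ ℂ) →ₗ[ℂ] (ℕ+ →₀ ℂ) →ₗ[ℂ] (ℕ+ →₀ ℂ) :=
  Finsupp.lsum ℂ fun i => LinearMap.toSpanSingleton ℂ _
    (Finsupp.lsum ℂ fun j => LinearMap.toSpanSingleton ℂ _
      ((((j : ℕ) : ℂ) - ((i : ℕ) : ℂ)) •
        (Finsupp.single (i + j) (1 : ℂ) + t • Finsupp.single (i + j - 1) (1 : ℂ))))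

namespace PNat

theorem sub_add_comm_of_lt {a b : ℕ+} (c : ℕ+) (h : b < a) : a - b + c = a + c - b := by
  have h' : b < a + c := h.trans (lt_add_right a c)
  apply coe_injective
  rw [add_coe, sub_coe, if_pos h, sub_coe, if_pos h', add_coe]
  have : (b : ℕ) < a := h
  omega

theorem cast_sub_of_lt {R : Type*} [AddGroupWithOne R] {a b : ℕ+} (h : b < a) :
    (((a - b : ℕ+) : ℕ) : R) = (a : ℕ) - (b : ℕ) := by
  rw [sub_coe, if_pos h, Nat.cast_sub (coe_le_coe _ _ |>.mpr h.le)]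

theorem one_lt_add (a b : ℕ+) : 1 < a + b :=
  one_le.trans_lt (lt_add_right a b)

end PNat

namespace LinearMap

variable {R M₁ M₂ M₃ N : Type*} [CommSemiring R] [AddCommMonoid M₁] [AddCommMonoid M₂]
  [AddCommMonoid M₃] [AddCommMonoid N] [Module R M₁] [Module R M₂] [Module R M₃] [Module R N]

def rotate (S : M₁ →ₗ[R] M₂ →ₗ[R] M₃ →ₗ[R] N) : M₃ →ₗ[R] M₁ →ₗ[R] M₂ →ₗ[R] N :=
  (lflip.toLinearMap ∘ₗ S).flip

@[simp]
theorem rotate_apply (S : M₁ →ₗ[R] M₂ →ₗ[R] M₃ →ₗ[R] N) (x : M₃) (y : M₁) (z : M₂) :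
    rotate S x y z = S y z x :=
  rfl

def jacobiator (B : M₁ →ₗ[R] M₁ →ₗ[R] M₁) : M₁ →ₗ[R] M₁ →ₗ[R] M₁ →ₗ[R] M₁ :=
  B.compr₂ B + rotate (B.compr₂ B) + rotate (rotate (B.compr₂ B))

@[simp]
theorem jacobiator_apply (B : M₁ →ₗ[R] M₁ →ₗ[R] M₁) (x y z : M₁) :
    jacobiator B x y z = B (B x y) z + B (B y z) x + B (B z x) y :=
  rfl

end LinearMap

theorem L1br1_single (t : ℂ) (i j : ℕ+) : L1br1 t (Finsupp.single i 1) (Finsupp.single j 1) =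
    (((j : ℕ) : ℂ) - ((i : ℕ) : ℂ)) •
      (Finsupp.single (i + j) (1 : ℂ) + t • Finsupp.single (i + j - 1) (1 : ℂ)) := by
  simp [L1br1]

theorem L1br1_add_flip (t : ℂ) : L1br1 t + (L1br1 t).flip = 0 := by
  ext i j : 4
  simp only [LinearMap.coe_comp, Function.comp_apply, Finsupp.lsingle_apply,
    LinearMap.add_apply, LinearMap.flip_apply, LinearMap.zero_apply, L1br1_single, add_comm j i]
  module

theorem jacobiator_L1br1 (t : ℂ) : (L1br1 t).jacobiator = 0 := by
  ext i j k : 6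
  simp only [LinearMap.coe_comp, Function.comp_apply, Finsupp.lsingle_apply,
    LinearMap.jacobiator_apply, LinearMap.zero_apply, L1br1_single, map_add, map_smul,
    LinearMap.add_apply, LinearMap.smul_apply]
  rw [PNat.sub_add_comm_of_lt k (PNat.one_lt_add i j),
    PNat.sub_add_comm_of_lt i (PNat.one_lt_add j k),
    PNat.sub_add_comm_of_lt j (PNat.one_lt_add k i),
    show j + k + i = i + j + k by ac_rfl, show k + i + j = i + j + k by ac_rfl]
  simp only [PNat.cast_sub_of_lt (PNat.one_lt_add _ _), PNat.add_coe, Nat.cast_add]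
  module

/-- for every `t ∈ ℂ`, the bracket `[e_i, e_j]¹_t = (j−i)(e_{i+j} + t e_{i+j−1})`
is skew-symmetric and satisfies the Jacobi identity, defining a one-parameter deformation of
the Lie algebra `L₁`. -/
theorem stmt_11 (t : ℂ) :
    (∀ i j : ℕ+, L1br1 t (Finsupp.single i 1) (Finsupp.single j 1) =
      (((j : ℕ) : ℂ) - ((i : ℕ) : ℂ)) •
        (Finsupp.single (i + j) (1 : ℂ) + t • Finsupp.single (i + j - 1) (1 : ℂ))) ∧
    (∀ x y : ℕ+ →₀ ℂ, L1br1 t x y = -L1br1 t y x) ∧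
    (∀ x y z : ℕ+ →₀ ℂ,
      L1br1 t (L1br1 t x y) z + L1br1 t (L1br1 t y z) x + L1br1 t (L1br1 t z x) y = 0) := by
  refine ⟨L1br1_single t, fun x y => ?_, fun x y z => ?_⟩
  · exact eq_neg_of_add_eq_zero_left (by simpa using congr($(L1br1_add_flip t) x y))
  · simpa using congr($(jacobiator_L1br1 t) x y z)
end

section
/- For k ≥ 2, define the 1-cochain μ_k : L₁ → W by μ_k(e_i) = (−1)^{i+1} · C(k−1, i−2) · e_{i−k}, where C(·,·) is the binomial coefficient (zero when i−2 < 0 or i−2 > k−1). For k ∈ {2, 3, 4}, the Chevalley–Eilenberg coboundary δμ_k, given by (δμ_k)(e_i, e_j) = e_i·μ_k(e_j) − e_j·μ_k(e_i) − μ_k([e_i,e_j]), takes values in the subspace of W spanned by {e_m : m ≥ 1} (i.e., in L₁) for all i, j ≥ 1. -/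
/-!
All three terms of `δμ_k(e_i, e_j)` are multiples of `e_{i+j−k}`, so only `m = i + j − k` can carry
a nonzero coefficient, and `m < 1` then forces `i + j ≤ k ≤ 4`. The finitely many remaining pairs
`(i, j)` are a direct check on binomial coefficients (which fails for `k = 5`, e.g. at `(2, 3)`).
-/

/-- The bilinear action of `L₁` on `W` (basis `e_j`, `j ∈ ℤ`): `e_i · e_j = (j − i) e_{i+j}`. -/
noncomputable def Wact : (ℕ+ →₀ ℂ) →ₗ[ℂ] (ℤ →₀ ℂ) →ₗ[ℂ] (ℤ →₀ ℂ) :=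
  Finsupp.lsum ℂ fun i => LinearMap.toSpanSingleton ℂ _
    (Finsupp.lsum ℂ fun j => LinearMap.toSpanSingleton ℂ _
      (((j : ℂ) - ((i : ℕ) : ℂ)) • Finsupp.single ((i : ℤ) + j) (1 : ℂ)))

/-- The cochain `μ_k : L₁ → W` on basis vectors:
`μ_k(e_i) = (−1)^{i+1} C(k−1, i−2) e_{i−k}` (zero when `i < 2` or `i − 2 > k − 1`). -/
noncomputable def muk (k : ℕ) (i : ℕ+) : ℤ →₀ ℂ :=
  if (i : ℕ) < 2 then 0
  else ((-1 : ℂ)) ^ ((i : ℕ) + 1) •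
    ((Nat.choose (k - 1) ((i : ℕ) - 2) : ℂ)) • Finsupp.single ((i : ℤ) - (k : ℤ)) (1 : ℂ)

open Finsupp

noncomputable def mukCoeff (k n : ℕ) : ℂ :=
  if n < 2 then 0 else (-1 : ℂ) ^ (n + 1) * (Nat.choose (k - 1) (n - 2) : ℂ)

lemma muk_eq_smul_single (k : ℕ) (i : ℕ+) :
    muk k i = mukCoeff k i • single ((i : ℤ) - k) (1 : ℂ) := by
  unfold muk mukCoeff
  split_ifs
  · rw [zero_smul]
  · rw [smul_smul]

lemma Wact_single_smul_single (i : ℕ+) (a : ℤ) (c : ℂ) :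
    Wact (single i 1) (c • single a 1) = (c * (a - (i : ℕ))) • single ((i : ℤ) + a) (1 : ℂ) := by
  rw [map_smul, Wact, lsum_single, LinearMap.toSpanSingleton_apply, one_smul, lsum_single,
    LinearMap.toSpanSingleton_apply, one_smul, smul_smul, mul_comm]

lemma coboundary_eq_smul_single_of_homogeneous (k : ℕ) (c : ℕ → ℂ) (μ : ℕ+ → ℤ →₀ ℂ)
    (hμ : ∀ n : ℕ+, μ n = c n • single ((n : ℤ) - k) 1) (i j : ℕ+) :
    Wact (single i 1) (μ j) - Wact (single j 1) (μ i) - (((j : ℕ) : ℂ) - (i : ℕ)) • μ (i + j)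
      = (c j * (j - k - i) - c i * (i - k - j) - (j - i) * c (i + j))
          • single ((i : ℤ) + j - k) (1 : ℂ) := by
  have hi : (i : ℤ) + ((j : ℤ) - k) = i + j - k := by ring
  have hj : (j : ℤ) + ((i : ℤ) - k) = i + j - k := by ring
  simp only [hμ, Wact_single_smul_single, PNat.add_coe, Nat.cast_add, hi, hj, smul_smul,
    ← sub_smul]
  congr 1
  push_cast
  ring

lemma mukCoeff_coboundary_eq_zero {k : ℕ} (hk : k ∈ ({2, 3, 4} : Set ℕ)) {i j : ℕ}
    (hi : 1 ≤ i) (hj : 1 ≤ j) (hij : i + j ≤ k) :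
    mukCoeff k j * (j - k - i) - mukCoeff k i * (i - k - j) - (j - i) * mukCoeff k (i + j) = 0 := by
  have hk4 : k ≤ 4 := by rcases hk with rfl | rfl | rfl <;> norm_num
  have hi3 : i ≤ 3 := by omega
  have hj3 : j ≤ 3 := by omega
  rcases hk with rfl | rfl | rfl <;> interval_cases i <;> interval_cases j <;>
    first | omega | norm_num [mukCoeff, Nat.choose]

/-- for `k ∈ {2, 3, 4}`, the Chevalley–Eilenberg coboundary
`(δμ_k)(e_i, e_j) = e_i·μ_k(e_j) − e_j·μ_k(e_i) − μ_k([e_i,e_j])`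
(with `[e_i,e_j] = (j−i) e_{i+j}`) takes values in the subspace of `W` spanned by
`{e_m : m ≥ 1}`, i.e. in `L₁`: its coefficient at every `e_m` with `m < 1` vanishes. -/
theorem stmt_17 :
    ∀ k ∈ ({2, 3, 4} : Set ℕ), ∀ i j : ℕ+, ∀ m : ℤ, m < 1 →
      (Wact (Finsupp.single i 1) (muk k j) - Wact (Finsupp.single j 1) (muk k i)
        - ((((j : ℕ) : ℂ) - ((i : ℕ) : ℂ)) • muk k (i + j))) m = 0 := by
  intro k hk i j m hm
  rw [coboundary_eq_smul_single_of_homogeneous k (mukCoeff k) (muk k) (muk_eq_smul_single k),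
    Finsupp.smul_apply, single_apply, smul_eq_mul]
  split_ifs with hdeg
  · have hij : (i : ℕ) + j ≤ k := by omega
    exact mul_eq_zero_of_left (mukCoeff_coboundary_eq_zero hk i.pos j.pos hij) 1
  · rw [mul_zero]
end
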